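/- Let Σ be an alphabet, Δ = {[, ], ⊙} a set of three tags disjoint from Σ, and let w be a tagged k-word (a word of odd length k ≥ 3 alternating terminals and tags, starting and ending with a terminal). Let s', s'' ∈ Δ be two distinct tags. Then for every h with 3 ≤ h ≤ k+2, the set of tagged h-words occurring as factors of the word w s' w s'' w is conflictual, i.e., it contains two distinct tagged h-words that become equal after erasing all tags. -/

import Mathlib

/-!
Common framework from the paper "Higher-order Operator Precedence Languages":
tagged words over an alphabet `α` (with a distinguished end-mark letter
`hash`), the tag set Δ = {[, ], ⊙}, tagged `k`-word factors, conflictual sets,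
the strictly-locally-testable tagged language `Loc(Φ)`, handles, reductions
`⇝_Φ`, and the (tagged) maximal languages `RedBar Φ` / `Red Φ`.

Conventions: an end-word `⍟` is the alternating word `(#⊙)^m #` of (tagged)
length `k-2`, so that it contributes `(k-1)/2` end-marks on each side,
matching all the examples of the paper.
-/

namespace HOP

/-- The three tags `[`, `]`, `⊙`. -/
inductive Tagg : Type where
  | lb : Tagg
  | rb : Tagg
  | dot : Tagg
deriving DecidableEq

/-- Symbols: either a terminal letter of `α` or a tag. -/
abbrev Sym (α : Type) := α ⊕ Tagg

/-- The projection `σ` erasing all tags. -/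
def erase {α : Type} (w : List (Sym α)) : List α := w.filterMap Sum.getLeft?

/-- Tagged words: words in `Σ(ΔΣ)*`, i.e. alternating terminals and tags,
beginning and ending with a terminal. -/
inductive IsTagged {α : Type} : List (Sym α) → Prop where
  | single (a : α) : IsTagged [Sum.inl a]
  | cons (a : α) (t : Tagg) {w : List (Sym α)} :
      IsTagged w → IsTagged (Sum.inl a :: Sum.inr t :: w)

/-- `φ_k(w)`: the set of tagged `k`-words occurring as factors of `w`. -/
def taggedFactors {α : Type} (k : ℕ) (w : List (Sym α)) : Set (List (Sym α)) :=
  {u | u.length = k ∧ IsTagged u ∧ u <:+: w}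

/-- A set of tagged words is conflictual iff it contains two distinct words
with the same tag-erasure. -/
def Conflictual {α : Type} (S : Set (List (Sym α))) : Prop :=
  ∃ x ∈ S, ∃ y ∈ S, x ≠ y ∧ erase x = erase y

def NonConflictual {α : Type} (S : Set (List (Sym α))) : Prop := ¬ Conflictual S

/-- `S` is a set of tagged `k`-words. -/
def TaggedKWords {α : Type} (k : ℕ) (S : Set (List (Sym α))) : Prop :=
  ∀ u ∈ S, IsTagged u ∧ u.length = k

/-- `hashWord hash n = # ⊙ # ⊙ … #` with `n+1` end-marks (tagged length `2n+1`). -/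
def hashWord {α : Type} (hash : α) : ℕ → List (Sym α)
  | 0 => [Sum.inl hash]
  | n + 1 => Sum.inl hash :: Sum.inr Tagg.dot :: hashWord hash n

/-- The end-word `⍟ ∈ (#⊙)*#` used with width `k`: it has tagged length `k-2`
(for odd `k ≥ 3`), i.e. `(k-1)/2` end-marks. -/
def endwFor {α : Type} (hash : α) (k : ℕ) : List (Sym α) := hashWord hash ((k - 3) / 2)

/-- `wrap hash k w = ⍟ [ w ] ⍟`. -/
def wrap {α : Type} (hash : α) (k : ℕ) (w : List (Sym α)) : List (Sym α) :=
  endwFor hash k ++ Sum.inr Tagg.lb :: (w ++ Sum.inr Tagg.rb :: endwFor hash k)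

/-- `finalWord hash k = ⍟ ⊙ ⍟`, the target of a complete reduction. -/
def finalWord {α : Type} (hash : α) (k : ℕ) : List (Sym α) :=
  endwFor hash k ++ Sum.inr Tagg.dot :: endwFor hash k

/-- The (full-word form of the) `k`-strictly-locally-testable tagged language:
all tagged `k`-word factors belong to `Φ`.  A tagged word `w` is in `Loc(Φ)`
in the sense of the paper iff `wrap hash k w ∈ LocFull k Φ`. -/
def LocFull {α : Type} (k : ℕ) (Φ : Set (List (Sym α))) : Set (List (Sym α)) :=
  {w | IsTagged w ∧ taggedFactors k w ⊆ Φ}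

/-- `Loc(Φ)` as a set of tagged words `w` (tested on `⍟[w]⍟`). -/
def LocTagged {α : Type} (hash : α) (k : ℕ) (Φ : Set (List (Sym α))) :
    Set (List (Sym α)) :=
  {w | IsTagged w ∧ wrap hash k w ∈ LocFull k Φ}

/-- The body `x` of a handle `[x]`: a tagged word over `Σ - {#}` whose tags are
all `⊙`. -/
def IsHandleBody {α : Type} (hash : α) (x : List (Sym α)) : Prop :=
  IsTagged x ∧ (∀ t : Tagg, Sum.inr t ∈ x → t = Tagg.dot) ∧ Sum.inl hash ∉ x

/-- One reduction step `w[x]z ⇝_Φ w s z`, allowed when `[x]` is a handle and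
both source and target have all their tagged `k`-factors in `Φ`. -/
def RStep {α : Type} (hash : α) (k : ℕ) (Φ : Set (List (Sym α)))
    (u v : List (Sym α)) : Prop :=
  ∃ w x z, ∃ s : Tagg, IsHandleBody hash x ∧
    u = w ++ Sum.inr Tagg.lb :: (x ++ Sum.inr Tagg.rb :: z) ∧
    v = w ++ Sum.inr s :: z ∧
    u ∈ LocFull k Φ ∧ v ∈ LocFull k Φ

/-- `⇝*_Φ`. -/
def Reduces {α : Type} (hash : α) (k : ℕ) (Φ : Set (List (Sym α))) :
    List (Sym α) → List (Sym α) → Prop :=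
  Relation.ReflTransGen (RStep hash k Φ)

/-- The tagged maximal language `Red̄(Φ)`. -/
def RedBar {α : Type} (hash : α) (k : ℕ) (Φ : Set (List (Sym α))) :
    Set (List (Sym α)) :=
  {w | IsTagged w ∧ Reduces hash k Φ (wrap hash k w) (finalWord hash k)}

/-- The maximal language `Red(Φ) = σ(Red̄(Φ))`. -/
def Red {α : Type} (hash : α) (k : ℕ) (Φ : Set (List (Sym α))) : Set (List α) :=
  erase '' RedBar hash k Φ

/-- Length-`j` factors of a plain word. -/
def plainFactors {α : Type} (j : ℕ) (w : List α) : Set (List α) :=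
  {u | u.length = j ∧ u <:+: w}

/-- The `j`-strictly-locally-testable (plain) language `Loc(F)`, with
end-words `#^(j-1)`; as usual the language is `ε`-free and over `Σ - {#}`. -/
def LocPlain {α : Type} (hash : α) (j : ℕ) (F : Set (List α)) : Set (List α) :=
  {x | x ≠ [] ∧ hash ∉ x ∧
    plainFactors j
      (List.replicate (j - 1) hash ++ x ++ List.replicate (j - 1) hash) ⊆ F}

end HOP


/-!
The two factors are `c s' p` and `c s'' p`, where `c` is the last terminal of `w` and `p` is the
prefix of `w` of length `h - 2`: each straddles one of the two junctions `w s w`, they differ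
only in the tag after `c`, and they have the same projection `c σ(p)`.
-/

theorem List.append_infix_append_of_suffix_of_prefix {α : Type*} {u v x y : List α}
    (hu : u <:+ x) (hv : v <+: y) : u ++ v <:+: x ++ y := by
  obtain ⟨a, rfl⟩ := hu
  obtain ⟨b, rfl⟩ := hv
  exact ⟨a, b, by simp⟩

namespace HOP

variable {α : Type}

theorem IsTagged.take {w : List (Sym α)} (hw : IsTagged w) {n : ℕ} (hn : Odd n)
    (hle : n ≤ w.length) : IsTagged (w.take n) := by
  induction hw generalizing n with
  | single a =>
    obtain rfl : n = 1 := by simp only [List.length_singleton] at hle; grind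
    exact IsTagged.single a
  | cons a t _ ih =>
    obtain ⟨_ | j, rfl⟩ := hn
    · exact IsTagged.single a
    · rw [show 2 * (j + 1) + 1 = 2 * j + 1 + 2 by ring] at hle ⊢
      exact IsTagged.cons a t (ih (odd_two_mul_add_one j) (by simp only [List.length_cons] at hle; omega))

theorem IsTagged.exists_inl_suffix {w : List (Sym α)} (hw : IsTagged w) :
    ∃ c, [Sum.inl c] <:+ w := by
  induction hw with
  | single a => exact ⟨a, List.suffix_refl _⟩
  | cons a t _ ih =>
    obtain ⟨c, hc⟩ := ih
    exact ⟨c, hc.trans ⟨[Sum.inl a, Sum.inr t], rfl⟩⟩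

theorem taggedFactors_mono {n : ℕ} {u v : List (Sym α)} (huv : u <:+: v) :
    taggedFactors n u ⊆ taggedFactors n v :=
  fun _ ⟨hlen, ht, hx⟩ => ⟨hlen, ht, hx.trans huv⟩

theorem cons_mem_taggedFactors_append {c : α} {t : Tagg} {p x y : List (Sym α)}
    (hp : IsTagged p) (hc : [Sum.inl c] <:+ x) (hpy : p <+: y) :
    Sum.inl c :: Sum.inr t :: p ∈ taggedFactors (p.length + 2) (x ++ Sum.inr t :: y) :=
  ⟨by simp, hp.cons c t,
    List.append_infix_append_of_suffix_of_prefix hc (List.prefix_cons_inj _ |>.mpr hpy)⟩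

theorem conflictual_of_tag_ne {S : Set (List (Sym α))} {c : α} {t t' : Tagg}
    {p : List (Sym α)} (ht : t ≠ t') (h : Sum.inl c :: Sum.inr t :: p ∈ S)
    (h' : Sum.inl c :: Sum.inr t' :: p ∈ S) : Conflictual S :=
  ⟨_, h, _, h', by simpa using ht, rfl⟩

theorem conflict_lemma_general {α : Type} {k : ℕ}
    {w : List (Sym α)} (hw : IsTagged w) (hwlen : w.length = k)
    {s' s'' : Tagg} (hne : s' ≠ s'')
    {h : ℕ} (hh : Odd h) (hh3 : 3 ≤ h) (hhk : h ≤ k + 2) :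
    Conflictual (taggedFactors h (w ++ Sum.inr s' :: w ++ Sum.inr s'' :: w)) := by
  obtain ⟨c, hc⟩ := hw.exists_inl_suffix
  set p := w.take (h - 2)
  have hp : IsTagged p := hw.take (by grind) (by omega)
  have hplen : p.length + 2 = h := by simp only [p, List.length_take]; omega
  have hpw : p <+: w := List.take_prefix _ _
  rw [← hplen, List.append_assoc, List.cons_append]
  refine conflictual_of_tag_ne (c := c) (p := p) hne ?_ ?_
  · exact cons_mem_taggedFactors_append hp hc (hpw.trans (List.prefix_append _ _))
  · exact taggedFactors_mono (List.infix_append_of_infix_right (List.suffix_cons _ _).isInfix)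
      (cons_mem_taggedFactors_append hp hc hpw)

/-- **Lemma 1** of the paper: if `w` is a tagged `k`-word (`k ≥ 3` odd) and
`s' ≠ s''` are tags, then for every odd `h` with `3 ≤ h ≤ k+2` the set of
tagged `h`-word factors of `w s' w s'' w` is conflictual. -/
theorem conflict_lemma {α : Type} {k : ℕ} (hk : Odd k) (hk3 : 3 ≤ k)
    {w : List (Sym α)} (hw : IsTagged w) (hwlen : w.length = k)
    {s' s'' : Tagg} (hne : s' ≠ s'')
    {h : ℕ} (hh : Odd h) (hh3 : 3 ≤ h) (hhk : h ≤ k + 2) :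
    Conflictual (taggedFactors h (w ++ Sum.inr s' :: w ++ Sum.inr s'' :: w)) :=
  conflict_lemma_general hw hwlen hne hh hh3 hhk

end HOP
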